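/- arXiv:2503.00892 — 4 statements merged into one kernel-verified Lean document; each statement's English description precedes it below -/
import Mathlib

section
/- Let n ≥ 1, let F : EuclideanSpace ℝ (Fin n) → ℝ be continuously differentiable, let x, x' ∈ EuclideanSpace ℝ (Fin n), and let (u_1, …, u_n) be an orthonormal basis of EuclideanSpace ℝ (Fin n). Then Integrated Gradients satisfies the completeness axiom with error term ε(F) = −F(x'): ∑_{i=1}^n IG_{u_i}(x, x', F) = F(x) − F(x'). (Axiom C for IG.) -/
/-! Expanding `x - x'` in the orthonormal basis (Parseval) collapses the sum of attributions to
`∫_0^1 ⟪∇F(x' + t • (x - x')), x - x'⟫ dt`, the integral of the derivative of `F` along the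
segment from `x'` to `x`, which is `F x - F x'` by the fundamental theorem of calculus. -/

open RealInnerProductSpace intervalIntegral

theorem ContDiff.continuous_gradient {𝕜 E : Type*} [RCLike 𝕜] [NormedAddCommGroup E]
    [InnerProductSpace 𝕜 E] [CompleteSpace E] {f : E → 𝕜} {n : WithTop ℕ∞}
    (hf : ContDiff 𝕜 n f) (hn : n ≠ 0) : Continuous (gradient f) :=
  (InnerProductSpace.toDual 𝕜 E).symm.continuous.comp (hf.continuous_fderiv hn)

section

variable {E : Type*} [NormedAddCommGroup E] [InnerProductSpace ℝ E] [CompleteSpace E]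

theorem intervalIntegral.integral_inner_left {g : ℝ → E} {a b : ℝ}
    (hg : IntervalIntegrable g MeasureTheory.volume a b) (w : E) :
    ∫ t in a..b, ⟪g t, w⟫ = ⟪∫ t in a..b, g t, w⟫ := by
  simp_rw [real_inner_comm w]
  exact (innerSL ℝ w).intervalIntegral_comp_comm hg

theorem OrthonormalBasis.sum_inner_mul_integral_inner {ι : Type*} [Fintype ι]
    (u : OrthonormalBasis ι ℝ E) (v : E) {g : ℝ → E} {a b : ℝ}
    (hg : IntervalIntegrable g MeasureTheory.volume a b) :
    ∑ i, ⟪v, u i⟫ * ∫ t in a..b, ⟪g t, u i⟫ = ∫ t in a..b, ⟪g t, v⟫ := by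
  simp_rw [integral_inner_left hg, real_inner_comm (u _) (∫ t in a..b, g t)]
  exact (u.sum_inner_mul_inner v _).trans (real_inner_comm _ _)

theorem ContDiff.integral_inner_gradient_segment {F : E → ℝ} (hF : ContDiff ℝ 1 F) (x x' : E) :
    ∫ t in (0:ℝ)..1, ⟪gradient F (x' + t • (x - x')), x - x'⟫ = F x - F x' := by
  have hγ : ∀ t : ℝ, HasDerivAt (fun s : ℝ => x' + s • (x - x')) (x - x') t := fun t => by
    simpa using ((hasDerivAt_id t).smul_const (x - x')).const_add x'
  have hderiv : ∀ t ∈ Set.uIcc (0:ℝ) 1, HasDerivAt (fun s => F (x' + s • (x - x')))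
      ⟪gradient F (x' + t • (x - x')), x - x'⟫ t := fun t _ => by
    rw [inner_gradient_left]
    exact ((hF.differentiable one_ne_zero _).hasFDerivAt).comp_hasDerivAt t (hγ t)
  have hcont : Continuous fun t : ℝ => ⟪gradient F (x' + t • (x - x')), x - x'⟫ := by
    have := hF.continuous_gradient one_ne_zero
    fun_prop
  rw [integral_eq_sub_of_hasDerivAt hderiv (hcont.intervalIntegrable 0 1)]
  simp

end

theorem ig_completeness_general (n : ℕ)
    (F : EuclideanSpace ℝ (Fin n) → ℝ) (hF : ContDiff ℝ 1 F)
    (x x' : EuclideanSpace ℝ (Fin n))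
    (u : OrthonormalBasis (Fin n) ℝ (EuclideanSpace ℝ (Fin n))) :
    ∑ i : Fin n,
        ⟪x - x', u i⟫ * ∫ t in (0:ℝ)..1, ⟪gradient F (x' + t • (x - x')), u i⟫ =
      F x - F x' := by
  have hgrad : Continuous fun t : ℝ => gradient F (x' + t • (x - x')) := by
    have := hF.continuous_gradient one_ne_zero
    fun_prop
  rw [u.sum_inner_mul_integral_inner (x - x') (hgrad.intervalIntegrable 0 1)]
  exact hF.integral_inner_gradient_segment x x'

/-- **Axiom C (completeness) for Integrated Gradients.**
With `IG_u(x, x', F) = ⟪x - x', u⟫ * ∫_0^1 ⟪∇F(x' + t • (x - x')), u⟫ dt`,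
summing the attributions over an orthonormal basis `(u i)` gives
`F x - F x'`, i.e. completeness holds with error term `ε(F) = -F x'`. -/
theorem ig_completeness (n : ℕ) (hn : 1 ≤ n)
    (F : EuclideanSpace ℝ (Fin n) → ℝ) (hF : ContDiff ℝ 1 F)
    (x x' : EuclideanSpace ℝ (Fin n))
    (u : OrthonormalBasis (Fin n) ℝ (EuclideanSpace ℝ (Fin n))) :
    ∑ i : Fin n,
        ⟪x - x', u i⟫ * ∫ t in (0:ℝ)..1, ⟪gradient F (x' + t • (x - x')), u i⟫ =
      F x - F x' :=
  ig_completeness_general n F hF x x' u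
end

section
/- Let n ≥ 1, let F : EuclideanSpace ℝ (Fin n) → ℝ be continuously differentiable, let γ : [0,1] → EuclideanSpace ℝ (Fin n) be a continuously differentiable curve with γ(0) = p and γ(1) = o, and let s : EuclideanSpace ℝ (Fin n) ≃ᵢ EuclideanSpace ℝ (Fin n) be a surjective isometry whose linear part (derivative) is the linear isometry L, i.e. s(x) = L(x) + c for some constant c. Then for all u, v ∈ EuclideanSpace ℝ (Fin n): α_{F∘s⁻¹, s∘γ}(s(p))(L u, L v) = α_{F,γ}(p)(u, v), i.e. −∫_0^1 ⟨∇(F∘s⁻¹)((s∘γ)(t)), L u⟩ · ⟨L v, (s∘γ)'(t)⟩ dt = −∫_0^1 ⟨∇F(γ(t)), u⟩ · ⟨v, γ'(t)⟩ dt. (Proposition 1, isometry invariance of the path attribution form, in the Euclidean case.) -/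
/-!
An isometry `s = L + c` of Euclidean space acts on the integrand pointwise: `s⁻¹ = L⁻¹ ∘ (· - c)`,
so `fderiv (F ∘ s⁻¹) (s x) = fderiv F x ∘ L⁻¹` and `⟨∇(F ∘ s⁻¹)(s x), L u⟩ = ⟨∇F(x), u⟩`, while
`(s ∘ γ)' = L γ'` and `L` preserves inner products.
-/

open RealInnerProductSpace intervalIntegral

namespace ContinuousLinearEquiv

variable {𝕜 : Type*} [NontriviallyNormedField 𝕜]
  {E E' G : Type*} [NormedAddCommGroup E] [NormedSpace 𝕜 E] [NormedAddCommGroup E']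
  [NormedSpace 𝕜 E'] [NormedAddCommGroup G] [NormedSpace 𝕜 G]

theorem fderiv_comp_apply_sub (e : E ≃L[𝕜] E') (c : E) (f : E' → G) (x : E) :
    fderiv 𝕜 (fun y => f (e (y - c))) x = (fderiv 𝕜 f (e (x - c))).comp (e : E →L[𝕜] E') :=
  (fderiv_comp_sub (f := f ∘ e) c).trans e.comp_right_fderiv

theorem deriv_comp_add_const (e : E ≃L[𝕜] E') (c : E') (f : 𝕜 → E) (t : 𝕜) :
    deriv (fun t => e (f t) + c) t = e (deriv f t) := by
  rw [deriv_add_const]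
  exact congrArg (· 1) (e.comp_fderiv (f := f) (x := t))

end ContinuousLinearEquiv

section AffineIsometry

variable {E : Type*} [NormedAddCommGroup E] [NormedSpace ℝ E] {s : E ≃ᵢ E} {L : E ≃ₗᵢ[ℝ] E}
  {c : E}

theorem IsometryEquiv.symm_apply_eq_of_forall_apply_eq_add (hs : ∀ x, s x = L x + c) (y : E) :
    s.symm y = L.symm (y - c) :=
  s.injective (by rw [s.apply_symm_apply, hs]; simp)

theorem deriv_isometryEquiv_comp (hs : ∀ x, s x = L x + c) (γ : ℝ → E) (t : ℝ) :
    deriv (fun t => s (γ t)) t = L (deriv γ t) := by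
  simp_rw [hs]
  exact L.toContinuousLinearEquiv.deriv_comp_add_const c γ t

end AffineIsometry

theorem inner_gradient_comp_isometryEquiv_symm {E : Type*} [NormedAddCommGroup E]
    [InnerProductSpace ℝ E] [CompleteSpace E] {s : E ≃ᵢ E} {L : E ≃ₗᵢ[ℝ] E} {c : E}
    (hs : ∀ x, s x = L x + c) (F : E → ℝ) (x u : E) :
    ⟪gradient (F ∘ s.symm) (s x), L u⟫ = ⟪gradient F x, u⟫ := by
  have hsymm : F ∘ s.symm = fun y => F (L.symm.toContinuousLinearEquiv (y - c)) :=
    funext fun y => congrArg F (IsometryEquiv.symm_apply_eq_of_forall_apply_eq_add hs y)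
  rw [inner_gradient_left, inner_gradient_left, hsymm,
    ContinuousLinearEquiv.fderiv_comp_apply_sub]
  simp [hs]

theorem path_attribution_isometry_invariance_general (n : ℕ)
    (F : EuclideanSpace ℝ (Fin n) → ℝ)
    (γ : ℝ → EuclideanSpace ℝ (Fin n))
    (s : EuclideanSpace ℝ (Fin n) ≃ᵢ EuclideanSpace ℝ (Fin n))
    (L : EuclideanSpace ℝ (Fin n) ≃ₗᵢ[ℝ] EuclideanSpace ℝ (Fin n))
    (c : EuclideanSpace ℝ (Fin n)) (hs : ∀ x, s x = L x + c)
    (u v : EuclideanSpace ℝ (Fin n)) :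
    -(∫ t in (0:ℝ)..1,
        ⟪gradient (F ∘ s.symm) (s (γ t)), L u⟫ * ⟪L v, deriv (fun t => s (γ t)) t⟫) =
      -(∫ t in (0:ℝ)..1, ⟪gradient F (γ t), u⟫ * ⟪v, deriv γ t⟫) := by
  congr 1
  refine integral_congr fun t _ => ?_
  rw [inner_gradient_comp_isometryEquiv_symm hs, deriv_isometryEquiv_comp hs, L.inner_map_map]

/-- **Proposition 1 (isometry invariance of the path attribution form,
Euclidean case).**  Let `s` be a surjective isometry of Euclidean space, which
is affine: `s x = L x + c` with linear part the linear isometry `L`.  Then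
the path attribution form is invariant:
`α_{F ∘ s⁻¹, s ∘ γ}(s p)(L u, L v) = α_{F, γ}(p)(u, v)`. -/
theorem path_attribution_isometry_invariance (n : ℕ) (hn : 1 ≤ n)
    (F : EuclideanSpace ℝ (Fin n) → ℝ) (hF : ContDiff ℝ 1 F)
    (γ : ℝ → EuclideanSpace ℝ (Fin n)) (hγ : ContDiff ℝ 1 γ)
    (p o : EuclideanSpace ℝ (Fin n)) (h0 : γ 0 = p) (h1 : γ 1 = o)
    (s : EuclideanSpace ℝ (Fin n) ≃ᵢ EuclideanSpace ℝ (Fin n))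
    (L : EuclideanSpace ℝ (Fin n) ≃ₗᵢ[ℝ] EuclideanSpace ℝ (Fin n))
    (c : EuclideanSpace ℝ (Fin n)) (hs : ∀ x, s x = L x + c)
    (u v : EuclideanSpace ℝ (Fin n)) :
    -(∫ t in (0:ℝ)..1,
        ⟪gradient (F ∘ s.symm) (s (γ t)), L u⟫ * ⟪L v, deriv (fun t => s (γ t)) t⟫) =
      -(∫ t in (0:ℝ)..1, ⟪gradient F (γ t), u⟫ * ⟪v, deriv γ t⟫) :=
  path_attribution_isometry_invariance_general n F γ s L c hs u v
end

section
/- Let n ≥ 1, let F : EuclideanSpace ℝ (Fin n) → ℝ be continuously differentiable, let (u_1, …, u_n) be an orthonormal basis of EuclideanSpace ℝ (Fin n), fix indices i ≠ j, and let s : EuclideanSpace ℝ (Fin n) → EuclideanSpace ℝ (Fin n) be the linear isometry with s(u_i) = u_j, s(u_j) = u_i and s(u_k) = u_k for k ≠ i, j. If F(s(x)) = F(x) for all x, then for all x, x' ∈ EuclideanSpace ℝ (Fin n): IG_{u_i}(x, x', F) = IG_{u_j}(s(x), s(x'), F). (Axiom SI, symmetry invariance, for Integrated Gradients.) -/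
/-!
Integrated Gradients is equivariant under linear isometries: `s` maps the segment from `x'` to `x`
onto the one from `s x'` to `s x`, and the chain rule gives `⟪∇F (s z), s u⟫ = ⟪∇(F ∘ s) z, u⟫`.
When `F ∘ s = F` and `s (u i) = u j`, this is exactly symmetry invariance.
-/

open RealInnerProductSpace intervalIntegral

section

variable {E E' : Type*} [NormedAddCommGroup E] [InnerProductSpace ℝ E] [CompleteSpace E]
  [NormedAddCommGroup E'] [InnerProductSpace ℝ E'] [CompleteSpace E']

/-- `IG_u(x, x', F)` in the paper's notation. -/
noncomputable def integratedGradients (F : E → ℝ) (u x x' : E) : ℝ :=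
  ⟪x - x', u⟫ * ∫ t in (0:ℝ)..1, ⟪gradient F (x' + t • (x - x')), u⟫

theorem inner_gradient_comp_linearIsometryEquiv (F : E' → ℝ) (s : E ≃ₗᵢ[ℝ] E') (y v : E) :
    ⟪gradient (F ∘ s) y, v⟫ = ⟪gradient F (s y), s v⟫ := by
  rw [inner_gradient_left, inner_gradient_left]
  exact DFunLike.congr_fun (s.toContinuousLinearEquiv.comp_right_fderiv (f := F) (x := y)) v

theorem integratedGradients_linearIsometryEquiv (F : E' → ℝ) (s : E ≃ₗᵢ[ℝ] E') (u x x' : E) :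
    integratedGradients F (s u) (s x) (s x') = integratedGradients (F ∘ s) u x x' := by
  simp only [integratedGradients, ← map_sub, ← map_smul, ← map_add, s.inner_map_map,
    inner_gradient_comp_linearIsometryEquiv]

end

theorem ig_symmetry_invariance_general (n : ℕ)
    (F : EuclideanSpace ℝ (Fin n) → ℝ)
    (u : OrthonormalBasis (Fin n) ℝ (EuclideanSpace ℝ (Fin n)))
    (i j : Fin n)
    (s : EuclideanSpace ℝ (Fin n) ≃ₗᵢ[ℝ] EuclideanSpace ℝ (Fin n))
    (hsi : s (u i) = u j)
    (hFs : ∀ x, F (s x) = F x)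
    (x x' : EuclideanSpace ℝ (Fin n)) :
    ⟪x - x', u i⟫ * ∫ t in (0:ℝ)..1, ⟪gradient F (x' + t • (x - x')), u i⟫ =
      ⟪s x - s x', u j⟫ *
        ∫ t in (0:ℝ)..1, ⟪gradient F (s x' + t • (s x - s x')), u j⟫ := by
  have hF_comp : F ∘ s = F := funext hFs
  change integratedGradients F (u i) x x' = integratedGradients F (u j) (s x) (s x')
  rw [← hsi, integratedGradients_linearIsometryEquiv, hF_comp]

/-- **Axiom SI (symmetry invariance) for Integrated Gradients.**
Let `(u k)` be an orthonormal basis, `i ≠ j`, and let `s` be the linear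
isometry swapping `u i` and `u j` and fixing the other basis vectors.  If
`F (s x) = F x` for all `x`, then
`IG_{u i}(x, x', F) = IG_{u j}(s x, s x', F)`. -/
theorem ig_symmetry_invariance (n : ℕ) (hn : 1 ≤ n)
    (F : EuclideanSpace ℝ (Fin n) → ℝ) (hF : ContDiff ℝ 1 F)
    (u : OrthonormalBasis (Fin n) ℝ (EuclideanSpace ℝ (Fin n)))
    (i j : Fin n) (hij : i ≠ j)
    (s : EuclideanSpace ℝ (Fin n) ≃ₗᵢ[ℝ] EuclideanSpace ℝ (Fin n))
    (hsi : s (u i) = u j) (hsj : s (u j) = u i)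
    (hsk : ∀ k : Fin n, k ≠ i → k ≠ j → s (u k) = u k)
    (hFs : ∀ x, F (s x) = F x)
    (x x' : EuclideanSpace ℝ (Fin n)) :
    ⟪x - x', u i⟫ * ∫ t in (0:ℝ)..1, ⟪gradient F (x' + t • (x - x')), u i⟫ =
      ⟪s x - s x', u j⟫ *
        ∫ t in (0:ℝ)..1, ⟪gradient F (s x' + t • (s x - s x')), u j⟫ :=
  ig_symmetry_invariance_general n F u i j s hsi hFs x x'
end

section
/- Let n ≥ 1, let F : EuclideanSpace ℝ (Fin n) → ℝ be continuously differentiable, let γ : [0,1] → EuclideanSpace ℝ (Fin n) be a continuously differentiable curve with γ(0) = p and γ(1) = o, and suppose Q : EuclideanSpace ℝ (Fin n) →ₗ[ℝ] EuclideanSpace ℝ (Fin n) is a symmetric linear endomorphism satisfying ⟨Q u, v⟩ = (1/2)·(α_{F,γ}(p)(u,v) + α_{F,γ}(p)(v,u)) for all u, v. Then the trace of Q equals F(p) − F(o). (Trace form of Proposition 2: the trace of the endomorphism associated to the symmetrised path attribution form recovers the completeness error term.) -/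
/-!
Only the diagonal of the symmetrised form matters for the trace, and there it agrees with
`α_{F,γ}(p)`. Summing `⟪∇F(γ t), uᵢ⟫ ⟪uᵢ, γ' t⟫` over an orthonormal basis gives
`⟪∇F(γ t), γ' t⟫` (Parseval), which is the derivative of `F ∘ γ`; the fundamental theorem
of calculus then yields `tr Q = -(F o - F p)`.
-/

open RealInnerProductSpace intervalIntegral MeasureTheory

namespace LinearMap

variable {E : Type*} [NormedAddCommGroup E] [InnerProductSpace ℝ E] [FiniteDimensional ℝ E]

theorem trace_eq_integral_inner_of_inner_self_eq (Q : E →ₗ[ℝ] E) {g v : ℝ → E}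
    (hg : Continuous g) (hv : Continuous v) {a b : ℝ}
    (hQ : ∀ u, ⟪u, Q u⟫ = ∫ t in a..b, ⟪g t, u⟫ * ⟪u, v t⟫) :
    trace ℝ E Q = ∫ t in a..b, ⟪g t, v t⟫ := by
  set w := stdOrthonormalBasis ℝ E
  have hint : ∀ i, IntervalIntegrable (fun t => ⟪g t, w i⟫ * ⟪w i, v t⟫) volume a b :=
    fun i => ((hg.inner continuous_const).mul (continuous_const.inner hv)).intervalIntegrable a b
  calc trace ℝ E Q = ∑ i, ∫ t in a..b, ⟪g t, w i⟫ * ⟪w i, v t⟫ := by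
        simp only [trace_eq_sum_inner Q w, hQ]
    _ = ∫ t in a..b, ∑ i, ⟪g t, w i⟫ * ⟪w i, v t⟫ :=
        (integral_finsetSum fun i _ => hint i).symm
    _ = ∫ t in a..b, ⟪g t, v t⟫ := by simp only [w.sum_inner_mul_inner]

end LinearMap

section Gradient

variable {E : Type*} [NormedAddCommGroup E] [InnerProductSpace ℝ E] [CompleteSpace E]
  {F : E → ℝ} {γ : ℝ → E}

theorem ContDiff.continuous_gradient_s8 (hF : ContDiff ℝ 1 F) : Continuous (gradient F) :=
  (InnerProductSpace.toDual ℝ E).symm.continuous.comp (hF.continuous_fderiv one_ne_zero)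

theorem HasGradientAt.comp_hasDerivAt {t : ℝ} {f' γ' : E} (hF : HasGradientAt F f' (γ t))
    (hγ : HasDerivAt γ γ' t) : HasDerivAt (F ∘ γ) ⟪f', γ'⟫ t := by
  simpa using hF.hasFDerivAt.comp_hasDerivAt t hγ

theorem integral_inner_gradient_comp_deriv (hF : ContDiff ℝ 1 F) (hγ : ContDiff ℝ 1 γ)
    (a b : ℝ) : ∫ t in a..b, ⟪gradient F (γ t), deriv γ t⟫ = F (γ b) - F (γ a) := by
  refine integral_eq_sub_of_hasDerivAt (f := F ∘ γ) (fun t _ => ?_) ?_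
  · exact ((hF.differentiable one_ne_zero _).hasGradientAt).comp_hasDerivAt
      ((hγ.differentiable one_ne_zero t).hasDerivAt)
  · exact ((hF.continuous_gradient_s8.comp hγ.continuous).inner
      (hγ.continuous_deriv le_rfl)).intervalIntegrable a b

end Gradient

theorem trace_path_attribution_general (n : ℕ)
    (F : EuclideanSpace ℝ (Fin n) → ℝ) (hF : ContDiff ℝ 1 F)
    (γ : ℝ → EuclideanSpace ℝ (Fin n)) (hγ : ContDiff ℝ 1 γ)
    (p o : EuclideanSpace ℝ (Fin n)) (h0 : γ 0 = p) (h1 : γ 1 = o)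
    (Q : EuclideanSpace ℝ (Fin n) →ₗ[ℝ] EuclideanSpace ℝ (Fin n))
    (hQ : ∀ u v : EuclideanSpace ℝ (Fin n),
      ⟪Q u, v⟫ = (1 / 2) *
        ((-(∫ t in (0:ℝ)..1, ⟪gradient F (γ t), u⟫ * ⟪v, deriv γ t⟫)) +
          (-(∫ t in (0:ℝ)..1, ⟪gradient F (γ t), v⟫ * ⟪u, deriv γ t⟫)))) :
    LinearMap.trace ℝ (EuclideanSpace ℝ (Fin n)) Q = F p - F o := by
  have hdiag : ∀ u, ⟪u, (-Q) u⟫ =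
      ∫ t in (0:ℝ)..1, ⟪gradient F (γ t), u⟫ * ⟪u, deriv γ t⟫ := by
    intro u
    rw [LinearMap.neg_apply, inner_neg_right, real_inner_comm, hQ u u]
    ring
  have htrace := (-Q).trace_eq_integral_inner_of_inner_self_eq (g := fun t => gradient F (γ t))
    (hF.continuous_gradient_s8.comp hγ.continuous) (hγ.continuous_deriv le_rfl) hdiag
  rw [integral_inner_gradient_comp_deriv hF hγ, h0, h1, map_neg] at htrace
  linarith

/-- **Trace form of Proposition 2.**  If `Q` is the symmetric endomorphism
associated (via the metric) to the symmetrised path attribution form, i.e.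
`⟪Q u, v⟫ = (1/2) * (α_{F,γ}(p)(u, v) + α_{F,γ}(p)(v, u))` with
`α_{F,γ}(p)(u, v) = -∫_0^1 ⟪∇F(γ t), u⟫ * ⟪v, γ' t⟫ dt`, then
`tr Q = F p - F o`. -/
theorem trace_path_attribution (n : ℕ) (hn : 1 ≤ n)
    (F : EuclideanSpace ℝ (Fin n) → ℝ) (hF : ContDiff ℝ 1 F)
    (γ : ℝ → EuclideanSpace ℝ (Fin n)) (hγ : ContDiff ℝ 1 γ)
    (p o : EuclideanSpace ℝ (Fin n)) (h0 : γ 0 = p) (h1 : γ 1 = o)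
    (Q : EuclideanSpace ℝ (Fin n) →ₗ[ℝ] EuclideanSpace ℝ (Fin n))
    (hsym : ∀ u v : EuclideanSpace ℝ (Fin n), ⟪Q u, v⟫ = ⟪u, Q v⟫)
    (hQ : ∀ u v : EuclideanSpace ℝ (Fin n),
      ⟪Q u, v⟫ = (1 / 2) *
        ((-(∫ t in (0:ℝ)..1, ⟪gradient F (γ t), u⟫ * ⟪v, deriv γ t⟫)) +
          (-(∫ t in (0:ℝ)..1, ⟪gradient F (γ t), v⟫ * ⟪u, deriv γ t⟫)))) :
    LinearMap.trace ℝ (EuclideanSpace ℝ (Fin n)) Q = F p - F o :=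
  trace_path_attribution_general n F hF γ hγ p o h0 h1 Q hQ
end
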